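/- arXiv:1901.10727 — 2 statements merged into one kernel-verified Lean document; each statement's English description precedes it below -/
import Mathlib

section
/- Let G be a topological group that contains a subspace homeomorphic to the Sorgenfrey line ℝₗ. Then G contains a discrete subspace of cardinality continuum 𝔠 (i.e., there is a set D ⊆ G with |D| = 𝔠 whose subspace topology is discrete). -/
open Set Topology

def SorgenfreyLine : Type := ℝ

notation "ℝₗ" => SorgenfreyLine

noncomputable instance : Field ℝₗ := inferInstanceAs (Field ℝ)

noncomputable instance : LinearOrder ℝₗ := inferInstanceAs (LinearOrder ℝ)

instance : IsStrictOrderedRing ℝₗ := inferInstanceAs (IsStrictOrderedRing ℝ)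

instance : TopologicalSpace ℝₗ :=
  TopologicalSpace.generateFrom {s : Set ℝₗ | ∃ a b : ℝₗ, a < b ∧ s = Set.Ico a b}

/-- The spread of a topological space: the supremum of cardinalities of discrete subspaces. -/
noncomputable def spread (X : Type*) [TopologicalSpace X] : Cardinal :=
  sSup {c : Cardinal | ∃ D : Set X, DiscreteTopology D ∧ Cardinal.mk D = c}

def Cometrizable (Y : Type*) [t : TopologicalSpace Y] : Prop :=
  ∃ τ : TopologicalSpace Y, t ≤ τ ∧ @TopologicalSpace.MetrizableSpace Y τ ∧
    ∀ y : Y, ∀ U ∈ nhds y, ∃ V ∈ nhds y, V ⊆ U ∧ IsClosed[τ] V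

def IsKDense {X : Type*} [TopologicalSpace X] (D : Set X) : Prop :=
  ∀ K : Set X, IsCompact K → ∃ K' : Set X, IsCompact K' ∧ K ⊆ K' ∧ K' ⊆ closure (D ∩ K')

def KSeparable (X : Type*) [TopologicalSpace X] : Prop :=
  ∃ D : Set X, D.Countable ∧ IsKDense D

/-!
Let `F : ℝₗ → G` be the embedding and `d y = F y * F (-y)`. Since `[a, ∞)` is open in `ℝₗ`,
some open set meets the copy of `ℝₗ` exactly in `F '' [a, ∞)`. By continuity of the group
operations, for `y` slightly to the right of `x` the factor `F (-y) = (F y)⁻¹ * d y` would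
stay in such a set around `F (-x)` whenever `d y` is close to `d x`, which forces `y ≤ x`;
symmetrically on the left with `F y = d y * (F (-y))⁻¹`. So `d x` has a neighbourhood
avoiding `d y` for `0 < |y - x| < η x`. As `𝔠` has uncountable cofinality, one of the
countably many grid cells `{x | ⌊x (n + 1)⌋ = k, 1 / (n + 1) < η x}` has size `𝔠`; on it
`d` is injective with discrete image.
-/
noncomputable instance : FloorRing ℝₗ := inferInstanceAs (FloorRing ℝ)

instance : Archimedean ℝₗ := inferInstanceAs (Archimedean ℝ)

open Cardinal

theorem Cardinal.aleph0_lt_cof_ord_continuum : ℵ₀ < (𝔠).ord.cof := by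
  rw [← two_power_aleph0]
  exact lt_cof_ord_power le_rfl one_lt_two

theorem exists_mk_eq_forall_abs_sub_lt {K : Type*} [Field K] [LinearOrder K]
    [IsStrictOrderedRing K] [FloorRing K] [Archimedean K] (hK : ℵ₀ < (#K).ord.cof)
    (η : K → K) (hη : ∀ x, 0 < η x) :
    ∃ A : Set K, #A = #K ∧ ∀ x ∈ A, ∀ y ∈ A, |y - x| < η x := by
  choose N hN using fun x => exists_nat_one_div_lt (hη x)
  let cell : K → ULift.{_, 0} (ℕ × ℤ) := fun x => ⟨N x, ⌊x * (N x + 1)⌋⟩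
  have hcell : #(ULift.{_, 0} (ℕ × ℤ)) < (#K).ord.cof := by simpa using hK
  obtain ⟨⟨n, k⟩, hA⟩ :=
    infinite_pigeonhole cell ((Ordinal.cof_ord_le _).trans' hK.le) hcell
  refine ⟨_, hA, fun x hx y hy => ?_⟩
  simp only [Set.mem_preimage, Set.mem_singleton_iff, cell, ULift.up.injEq, Prod.mk.injEq]
    at hx hy
  have hpos : (0 : K) < N x + 1 := by positivity
  have hfloor : |y * (N x + 1) - x * (N x + 1)| < 1 :=
    Int.abs_sub_lt_one_of_floor_eq_floor (by rw [hx.2, ← hy.2, hy.1, hx.1])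
  calc |y - x| < 1 / (N x + 1) := by
        rwa [lt_div_iff₀ hpos, ← abs_of_pos hpos, ← abs_mul, sub_mul]
    _ < η x := hN x

namespace SorgenfreyLine

theorem isOpen_Ico (a b : ℝₗ) : IsOpen (Ico a b) := by
  rcases lt_or_ge a b with hab | hab
  · exact TopologicalSpace.isOpen_generateFrom_of_mem ⟨a, b, hab, rfl⟩
  · simp [Ico_eq_empty_of_le hab]

theorem isOpen_Ici (a : ℝₗ) : IsOpen (Ici a) :=
  isOpen_iff_forall_mem_open.mpr fun x hx =>
    ⟨Ico x (x + 1), fun _ hy => hx.trans hy.1, isOpen_Ico _ _, le_rfl, lt_add_one x⟩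

theorem isTopologicalBasis_Ico :
    TopologicalSpace.IsTopologicalBasis {s : Set ℝₗ | ∃ a b : ℝₗ, a < b ∧ s = Ico a b} := by
  refine ⟨?_, ?_, rfl⟩
  · rintro _ ⟨a, b, -, rfl⟩ _ ⟨c, d, -, rfl⟩ x hx
    rw [Ico_inter_Ico] at hx ⊢
    exact ⟨_, ⟨_, _, hx.1.trans_lt hx.2, rfl⟩, hx, subset_rfl⟩
  · refine eq_univ_of_forall fun x => mem_sUnion.mpr ?_
    exact ⟨Ico x (x + 1), ⟨x, x + 1, lt_add_one x, rfl⟩, le_rfl, lt_add_one x⟩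

theorem exists_Ico_subset_of_mem_nhds {x : ℝₗ} {s : Set ℝₗ} (hs : s ∈ 𝓝 x) :
    ∃ δ > 0, Ico x (x + δ) ⊆ s := by
  obtain ⟨_, ⟨a, b, -, rfl⟩, ⟨hax, hxb⟩, hs⟩ := isTopologicalBasis_Ico.mem_nhds_iff.mp hs
  refine ⟨b - x, sub_pos.mpr hxb, fun y hy => hs ⟨hax.trans hy.1, ?_⟩⟩
  simpa using hy.2

theorem exists_nhds_forall_mul_neg_mem_eq {G : Type*} [Group G]
    [TopologicalSpace G] [IsTopologicalGroup G] {F : ℝₗ → G} (hF : IsInducing F) (x : ℝₗ) :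
    ∃ U ∈ 𝓝 (F x * F (-x)), ∃ η > 0, ∀ y, |y - x| < η → F y * F (-y) ∈ U → y = x := by
  obtain ⟨O, hO, hOF⟩ := hF.isOpen_iff.mp (isOpen_Ici (-x))
  obtain ⟨O', hO', hO'F⟩ := hF.isOpen_iff.mp (isOpen_Ici x)
  have hright : (fun p : ℝₗ × G => (F p.1)⁻¹ * p.2) ⁻¹' O ∈ 𝓝 (x, F x * F (-x)) := by
    refine (hF.continuous.fst'.inv.mul continuous_snd).continuousAt.preimage_mem_nhds
      (hO.mem_nhds ?_)
    simp [← mem_preimage, hOF]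
  have hleft : (fun p : ℝₗ × G => p.2 * (F p.1)⁻¹) ⁻¹' O' ∈ 𝓝 (-x, F x * F (-x)) := by
    refine (continuous_snd.mul hF.continuous.fst'.inv).continuousAt.preimage_mem_nhds
      (hO'.mem_nhds ?_)
    simp [← mem_preimage, hO'F]
  obtain ⟨s, hs, V, hV, hsV⟩ := mem_nhds_prod_iff.mp hright
  obtain ⟨s', hs', V', hV', hsV'⟩ := mem_nhds_prod_iff.mp hleft
  obtain ⟨δ, hδ, hδs⟩ := exists_Ico_subset_of_mem_nhds hs
  obtain ⟨δ', hδ', hδs'⟩ := exists_Ico_subset_of_mem_nhds hs'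
  refine ⟨V ∩ V', Filter.inter_mem hV hV', min δ δ', lt_min hδ hδ', fun y hy hyV => ?_⟩
  rw [abs_sub_lt_iff, lt_min_iff, lt_min_iff] at hy
  by_contra hne
  rcases lt_or_gt_of_ne hne with hlt | hgt
  · have hny : -y ∈ Ico (-x) (-x + δ') := ⟨by linarith, by linarith⟩
    have hy' : F y ∈ O' := by simpa using hsV' (mk_mem_prod (hδs' hny) hyV.2)
    rw [← mem_preimage, hO'F] at hy'
    exact hlt.not_ge hy'
  · have hyδ : y ∈ Ico x (x + δ) := ⟨hgt.le, by linarith⟩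
    have hy' : F (-y) ∈ O := by simpa using hsV (mk_mem_prod (hδs hyδ) hyV.1)
    rw [← mem_preimage, hOF] at hy'
    exact hgt.not_ge (neg_le_neg_iff.mp hy')

end SorgenfreyLine

section IsolatedImage

variable {X Y : Type*} [TopologicalSpace Y] {d : X → Y} {A : Set X}

theorem Set.injOn_of_forall_exists_nhds (h : ∀ x ∈ A, ∃ U ∈ 𝓝 (d x), ∀ y ∈ A, d y ∈ U → y = x) :
    InjOn d A := fun x hx y hy hxy => by
  obtain ⟨U, hU, hUA⟩ := h x hx
  exact (hUA y hy (hxy ▸ mem_of_mem_nhds hU)).symm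

theorem discreteTopology_image_of_forall_exists_nhds
    (h : ∀ x ∈ A, ∃ U ∈ 𝓝 (d x), ∀ y ∈ A, d y ∈ U → y = x) : DiscreteTopology (d '' A) := by
  rw [discreteTopology_subtype_iff']
  rintro _ ⟨x, hx, rfl⟩
  obtain ⟨U, hU, hUA⟩ := h x hx
  obtain ⟨W, hWU, hW, hxW⟩ := mem_nhds_iff.mp hU
  refine ⟨W, hW, Subset.antisymm ?_ ?_⟩
  · rintro _ ⟨hyW, y, hy, rfl⟩
    rw [hUA y hy (hWU hyW)]
    rfl
  · rintro _ rfl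
    exact ⟨hxW, x, hx, rfl⟩

end IsolatedImage

/-- Each topological group containing a topological copy of the Sorgenfrey line contains a
discrete subspace of cardinality continuum. -/
theorem sorgenfrey_in_group_discrete_continuum {G : Type*} [Group G] [TopologicalSpace G]
    [IsTopologicalGroup G] (S : Set G) (h : Nonempty (S ≃ₜ ℝₗ)) :
    ∃ D : Set G, DiscreteTopology D ∧ Cardinal.mk D = Cardinal.continuum := by
  obtain ⟨e⟩ := h
  set F : ℝₗ → G := fun z => e.symm z
  have hF : IsInducing F := IsInducing.subtypeVal.comp e.symm.isInducing
  choose U hU η hη hUη using SorgenfreyLine.exists_nhds_forall_mul_neg_mem_eq hF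
  have hmk : #ℝₗ = 𝔠 := mk_real
  have hcof : ℵ₀ < (#ℝₗ).ord.cof := hmk ▸ aleph0_lt_cof_ord_continuum
  obtain ⟨A, hA, hAη⟩ := exists_mk_eq_forall_abs_sub_lt hcof η hη
  have hsep : ∀ x ∈ A, ∃ V ∈ 𝓝 (F x * F (-x)), ∀ y ∈ A, F y * F (-y) ∈ V → y = x :=
    fun x hx => ⟨U x, hU x, fun y hy => hUη x y (hAη x hx y hy)⟩
  refine ⟨_, discreteTopology_image_of_forall_exists_nhds hsep, ?_⟩
  have hcard := mk_image_eq_of_injOn_lift _ _ (injOn_of_forall_exists_nhds hsep)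
  rwa [hA, hmk, lift_continuum, lift_uzero] at hcard
end

section
/- Suppose Γ is a subset of ℝₗ × ℝₗ and u, v are rational numbers such that for every (x, y) ∈ Γ one has x < u, y < v, and Γ ∩ ([x,u) × [y,v)) = {(x,y)}. Then Γ is the graph of a strictly decreasing function; that is, for any two distinct points (x₁,y₁), (x₂,y₂) ∈ Γ, x₁ ≠ x₂, and x₁ < x₂ implies y₁ > y₂. -/
open Set Topology

section IsolatingBoxes

variable {α β : Type*}

theorem isAntichain_of_isolating_boxes [Preorder α] [Preorder β] {Γ : Set (α × β)}
    {u : α} {v : β} (hlt : ∀ q ∈ Γ, q.1 < u ∧ q.2 < v)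
    (hbox : ∀ p ∈ Γ, Γ ∩ (Ico p.1 u ×ˢ Ico p.2 v) = {p}) :
    IsAntichain (· ≤ ·) Γ := by
  refine fun p hp q hq hne hle => hne ?_
  have hq_box : q ∈ Γ ∩ (Ico p.1 u ×ˢ Ico p.2 v) :=
    ⟨hq, ⟨hle.1, (hlt q hq).1⟩, ⟨hle.2, (hlt q hq).2⟩⟩
  rw [hbox p hp] at hq_box
  exact hq_box.symm

theorem IsAntichain.fst_ne_of_ne [Preorder α] [LinearOrder β] {s : Set (α × β)}
    (hs : IsAntichain (· ≤ ·) s) {p q : α × β} (hp : p ∈ s) (hq : q ∈ s) (hne : p ≠ q) :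
    p.1 ≠ q.1 := by
  intro h
  rcases le_total p.2 q.2 with h2 | h2
  · exact hne (hs.eq hp hq ⟨h.le, h2⟩)
  · exact hne (hs.eq' hp hq ⟨h.ge, h2⟩)

theorem IsAntichain.snd_lt_of_fst_lt [Preorder α] [LinearOrder β] {s : Set (α × β)}
    (hs : IsAntichain (· ≤ ·) s) {p q : α × β} (hp : p ∈ s) (hq : q ∈ s) (h : p.1 < q.1) :
    q.2 < p.2 :=
  lt_of_not_ge fun h2 => h.ne (congrArg Prod.fst (hs.eq hp hq ⟨h.le, h2⟩))

end IsolatingBoxes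

/-- If every point $(x,y)$ of $\Gamma$ is the unique point of $\Gamma$ in
$[x,u) \times [y,v)$, then $\Gamma$ is the graph of a strictly decreasing function. -/
theorem graph_of_isolating_boxes (Γ : Set (ℝₗ × ℝₗ)) (u v : ℚ)
    (h : ∀ p ∈ Γ, p.1 < (u : ℝₗ) ∧ p.2 < (v : ℝₗ) ∧
      Γ ∩ (Set.Ico p.1 (u : ℝₗ) ×ˢ Set.Ico p.2 (v : ℝₗ)) = {p}) :
    ∀ p ∈ Γ, ∀ q ∈ Γ, p ≠ q → p.1 ≠ q.1 ∧ (p.1 < q.1 → q.2 < p.2) := by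
  have hΓ : IsAntichain (· ≤ ·) Γ :=
    isAntichain_of_isolating_boxes (fun q hq => ⟨(h q hq).1, (h q hq).2.1⟩)
      (fun p hp => (h p hp).2.2)
  exact fun p hp q hq hne => ⟨hΓ.fst_ne_of_ne hp hq hne, hΓ.snd_lt_of_fst_lt hp hq⟩
end
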